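/- Let X be a weakly linear quantum-Wajsberg algebra. Then for all x, y, z ∈ X: (1) ((x→y)→z) ⊓ ((y→x)→z) = z; (2) x⊓y = 0 implies (z→x) ⊓ (z→y) = z*; (3) x ⊓ (y⊓z) = 0 implies x ⊓ (z⊓y) = 0; (4) x ∼ y and x⊔y = 1 imply x = y = 1. -/
import Mathlib


/-- The underlying involutive bounded BE algebra of a quantum-Wajsberg algebra. -/
class PreQW (X : Type*) where
  imp : X → X → X
  zero : X
  one : X
  imp_self : ∀ x : X, imp x x = one
  imp_one : ∀ x : X, imp x one = one
  one_imp : ∀ x : X, imp one x = x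
  exchange : ∀ x y z : X, imp x (imp y z) = imp y (imp x z)
  zero_imp : ∀ x : X, imp zero x = one
  involutive : ∀ x : X, imp (imp x zero) zero = x

namespace PreQW

variable {X : Type*} [PreQW X]

/-- `x* = x → 0`. -/
def qstar (x : X) : X := imp x zero

/-- `x ⊔ y = (x → y) → y`. -/
def qsup (x y : X) : X := imp (imp x y) y

/-- `x ⊓ y = ((x* → y*) → y*)*`. -/
def qinf (x y : X) : X := qstar (imp (imp (qstar x) (qstar y)) (qstar y))

/-- `x ⊙ y = (x → y*)*`. -/
def qprod (x y : X) : X := qstar (imp x (qstar y))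

/-- `x ≤ y` iff `x → y = 1`. -/
def qle (x y : X) : Prop := imp x y = one

/-- `x ≤_Q y` iff `x = x ⊓ y`. -/
def qleQ (x y : X) : Prop := x = qinf x y

/-- `xⁿ = x ⊙ ⋯ ⊙ x` (`n` factors), with `x⁰ = 1`. -/
def qpow (x : X) : ℕ → X
  | 0 => one
  | n + 1 => qprod x (qpow x n)

/-- A filter: nonempty, closed under `⊙`, and `x ∈ F` implies `y → x ∈ F`. -/
def IsFilter (F : Set X) : Prop :=
  F.Nonempty ∧ (∀ x ∈ F, ∀ y ∈ F, qprod x y ∈ F) ∧ (∀ x ∈ F, ∀ y : X, imp y x ∈ F)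

/-- A deductive system: contains `1` and is closed under modus ponens. -/
def IsDS (F : Set X) : Prop :=
  (one : X) ∈ F ∧ ∀ x ∈ F, ∀ y : X, imp x y ∈ F → y ∈ F

/-- A maximal filter: proper and not strictly contained in any proper filter. -/
def IsMaximal (F : Set X) : Prop :=
  IsFilter F ∧ F ≠ Set.univ ∧
    ∀ G : Set X, IsFilter G → F ⊆ G → G ≠ Set.univ → G = F

/-- The strong maximality condition: for every `x ∉ F`, `(xⁿ)* ∈ F` for some `n ≥ 1`. -/
def StrongMaxCond (F : Set X) : Prop :=
  ∀ x : X, x ∉ F → ∃ n : ℕ, 1 ≤ n ∧ qstar (qpow x n) ∈ F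

/-- A strongly maximal filter. -/
def IsStronglyMaximal (F : Set X) : Prop :=
  IsFilter F ∧ StrongMaxCond F

/-- `x ∼ y`: there is `α` with `x ≤ α ≤ x` and `y ≤ α ≤ y`. -/
def Persp (x y : X) : Prop :=
  ∃ α : X, imp x α = one ∧ imp α x = one ∧ imp y α = one ∧ imp α y = one

/-- `x ≡_F y` iff there is `λ` with `x, y ≤_Q λ` and `λ → x, λ → y ∈ F`. -/
def equivF (F : Set X) (x y : X) : Prop :=
  ∃ l : X, qleQ x l ∧ qleQ y l ∧ imp l x ∈ F ∧ imp l y ∈ F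

end PreQW

/-- A quantum-Wajsberg algebra: an involutive BE algebra satisfying axiom (QW). -/
class QW (X : Type*) extends PreQW X where
  qw : ∀ x y z : X,
    imp x (PreQW.qinf (PreQW.qinf x y) (PreQW.qinf z x)) =
      PreQW.qinf (imp x y) (imp x z)

open PreQW

section QWAux

variable {X : Type*} [QW X]

private lemma qwStarStar (x : X) : qstar (qstar x) = x := PreQW.involutive x

private lemma contrap (x y : X) : imp (qstar x) (qstar y) = imp y x := by
  show imp (imp x zero) (imp y zero) = imp y x
  rw [PreQW.exchange, PreQW.involutive]

private lemma qwStarOne : qstar (one : X) = zero := PreQW.one_imp zero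

private lemma qwStarZero : qstar (zero : X) = one := PreQW.imp_self zero

private lemma qwEqZeroOfStar {x : X} (h : qstar x = one) : x = zero := by
  rw [← qwStarStar x, h, qwStarOne]

private lemma qwEqOneOfStar {x : X} (h : qstar x = zero) : x = one := by
  rw [← qwStarStar x, h, qwStarZero]

private lemma one_inf (x : X) : qinf one x = x := by
  simp only [qinf, qwStarOne, PreQW.zero_imp, PreQW.one_imp]
  exact qwStarStar x

private lemma inf_one (x : X) : qinf x one = x := by
  simp only [qinf, qwStarOne]
  show qstar (imp (imp (qstar x) zero) zero) = x
  rw [PreQW.involutive]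
  exact qwStarStar x

private lemma inf_zero (x : X) : qinf x zero = zero := by
  simp only [qinf, qwStarZero, PreQW.imp_one, PreQW.imp_self]
  exact qwStarOne

private lemma zero_inf (x : X) : qinf zero x = zero := by
  simp only [qinf, qwStarZero, PreQW.one_imp, PreQW.imp_self]
  exact qwStarOne

/-- If `x ≤ y` and `x ⊓ y = 0` then `x = 0`. -/
private lemma eq_zero_of_le_inf {x y : X} (h1 : imp x y = one) (h2 : qinf x y = zero) :
    x = zero := by
  have q := QW.qw x y one
  rw [h2, h1, PreQW.imp_one, one_inf, one_inf, zero_inf] at q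
  exact qwEqZeroOfStar q

/-- In a weakly linear QW algebra, `x ⊔ y = 1` implies `x = 1` or `y = 1`. -/
private lemma sup_eq_one (hwl : ∀ x y : X, imp x y = one ∨ imp y x = one)
    {x y : X} (h : qsup x y = one) : x = one ∨ y = one := by
  rcases hwl x y with hxy | hyx
  · right
    have hs : qsup x y = y := by rw [qsup, hxy, PreQW.one_imp]
    rw [← hs, h]
  · left
    have h1 : imp (qstar x) (qstar y) = one := by rw [contrap]; exact hyx
    have h2 : qinf (qstar x) (qstar y) = zero := by
      have e : qinf (qstar x) (qstar y) = qstar (qsup x y) := by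
        show qstar (imp (imp (qstar (qstar x)) (qstar (qstar y))) (qstar (qstar y))) = _
        rw [qwStarStar, qwStarStar]; rfl
      rw [e, h, qwStarOne]
    have h0 := eq_zero_of_le_inf h1 h2
    exact qwEqOneOfStar h0

/-- `x ⊓ y = 0` implies `x = 0` or `y = 0` (weakly linear case). -/
private lemma inf_eq_zero (hwl : ∀ x y : X, imp x y = one ∨ imp y x = one)
    {x y : X} (h : qinf x y = zero) : x = zero ∨ y = zero := by
  have hs : qsup (qstar x) (qstar y) = one := by
    have e : qstar (qinf x y) = qsup (qstar x) (qstar y) :=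
      qwStarStar (qsup (qstar x) (qstar y))
    rw [h, qwStarZero] at e
    exact e.symm
  rcases sup_eq_one hwl hs with hx | hy
  · exact Or.inl (qwEqZeroOfStar hx)
  · exact Or.inr (qwEqZeroOfStar hy)

/-- `x* ⊓ (x → z) = x*`. -/
private lemma star_inf_imp (x z : X) : qinf (qstar x) (imp x z) = qstar x := by
  have q := QW.qw x zero z
  rw [inf_zero, zero_inf] at q
  exact q.symm

/-- `(x → y) ⊓ x* = x*`. -/
private lemma imp_inf_star (x y : X) : qinf (imp x y) (qstar x) = qstar x := by
  have q := QW.qw x y zero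
  rw [zero_inf, inf_zero] at q
  exact q.symm

/-- `z ⊓ (w → z) = z`. -/
private lemma inf_imp_self (z w : X) : qinf z (imp w z) = z := by
  have q := star_inf_imp (qstar z) (qstar w)
  rw [qwStarStar, contrap] at q
  exact q

/-- `(w → z) ⊓ z = z`. -/
private lemma imp_self_inf (z w : X) : qinf (imp w z) z = z := by
  have q := imp_inf_star (qstar z) (qstar w)
  rw [qwStarStar, contrap] at q
  exact q

end QWAux


/-- Proposition 5.3: properties of weakly linear QW algebras. -/
theorem qw_prop_5_3 {X : Type*} [QW X]
    (hwl : ∀ x y : X, imp x y = one ∨ imp y x = one) (x y z : X) :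
    (qinf (imp (imp x y) z) (imp (imp y x) z) = z) ∧
    (qinf x y = zero → qinf (imp z x) (imp z y) = qstar z) ∧
    (qinf x (qinf y z) = zero → qinf x (qinf z y) = zero) ∧
    (Persp x y → qsup x y = one → x = one ∧ y = one) := by
  refine ⟨?_, ?_, ?_, ?_⟩
  · rcases hwl x y with h | h
    · rw [h, PreQW.one_imp]
      exact inf_imp_self z (imp y x)
    · rw [h, PreQW.one_imp]
      exact imp_self_inf z (imp x y)
  · intro h
    rcases inf_eq_zero hwl h with hx | hy
    · rw [hx]
      exact star_inf_imp z y
    · rw [hy]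
      exact imp_inf_star z x
  · intro h
    rcases inf_eq_zero hwl h with hx | hc
    · rw [hx, zero_inf]
    · rcases inf_eq_zero hwl hc with hy | hz
      · rw [hy, inf_zero, inf_zero]
      · rw [hz, zero_inf, inf_zero]
  · rintro ⟨a, hxa, hax, hya, hay⟩ hsup
    rcases sup_eq_one hwl hsup with hx | hy
    · rw [hx, PreQW.one_imp] at hxa
      rw [hxa, PreQW.one_imp] at hay
      exact ⟨hx, hay⟩
    · rw [hy, PreQW.one_imp] at hya
      rw [hya, PreQW.one_imp] at hax
      exact ⟨hax, hy⟩
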